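/- arXiv:2409.18202 — 2 statements merged into one kernel-verified Lean document; each statement's English description precedes it below -/
import Mathlib

section
/- (Theorem 1: deterministic simulation of the quantum switch on part of a bipartite unitary channel and part of a bipartite general channel, order ABA.) Let d, d', e ≥ 1, let U be a unitary matrix on ℂ^{d'} ⊗ ℂ^{d} (factors: A'-system, target-size system), and let {B_j}_{j∈J} be a finite family of matrices on ℂ^{d} ⊗ ℂ^{e} (factors: target-size system, B'-system) with Σ_j B_j† B_j = 1. On the space H := ℂ²_c ⊗ ℂ^{d'}_{A'} ⊗ ℂ^{d}_{t} ⊗ ℂ^{e}_{B'} ⊗ ℂ^{d'}_{a₁} ⊗ ℂ^{d}_{a₂}, define the controlled-swap unitaries Q := |1⟩⟨1|_c ⊗ SWAP_{A',a₁} SWAP_{t,a₂} + |0⟩⟨0|_c ⊗ 1 and Q̄ := |0⟩⟨0|_c ⊗ SWAP_{A',a₁} SWAP_{t,a₂} + |1⟩⟨1|_c ⊗ 1, and define the circuit Kraus operators C_j := Q̄ · U_{(A',t)} · Q̄ · (B_j)_{(t,B')} · Q · U_{(A',t)} · Q, where X_{(P,Q)} denotes the operator X acting on the indicated tensor factors and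 the identity on all others. Define the switch Kraus operators on ℂ²_c ⊗ ℂ^{d'}_{A'} ⊗ ℂ^{d}_{t} ⊗ ℂ^{e}_{B'} by S_j := |0⟩⟨0|_c ⊗ (B_j)_{(t,B')} U_{(A',t)} + |1⟩⟨1|_c ⊗ U_{(A',t)} (B_j)_{(t,B')}. Then for every j, C_j = (S_j)_{(c,A',t,B')} · U_{(a₁,a₂)}; consequently, for every density matrix ρ on ℂ² ⊗ ℂ^{d'} ⊗ ℂ^{d} ⊗ ℂ^{e} and every density matrix ω on ℂ^{d'} ⊗ ℂ^{d}, the circuit output after discarding the auxiliary systems reproduces the quantum switch acting on part of the bipartite unitary channel U and part of the bipartite channel with Kraus operators {B_j}: Tr_{a₁a₂}[Σ_j C_j (ρ ⊗ ω) C_j†] = Σ_j S_j ρ S_j†. -/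
open scoped BigOperators ComplexOrder Matrix

noncomputable section

/-- The space ℂ²_c ⊗ ℂ^{d'}_{A'} ⊗ ℂ^{d}_t ⊗ ℂ^{e}_{B'} on which the switch output acts. -/
abbrev H4 (d' d e : ℕ) : Type := Fin 2 × Fin d' × Fin d × Fin e

/-- The full circuit space H = ℂ²_c ⊗ ℂ^{d'}_{A'} ⊗ ℂ^{d}_t ⊗ ℂ^{e}_{B'} ⊗ ℂ^{d'}_{a₁} ⊗ ℂ^{d}_{a₂}. -/
abbrev H6 (d' d e : ℕ) : Type := Fin 2 × Fin d' × Fin d × Fin e × Fin d' × Fin d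

variable (d' d e : ℕ)

/-- Q := |1⟩⟨1|_c ⊗ SWAP_{A',a₁} SWAP_{t,a₂} + |0⟩⟨0|_c ⊗ 1. -/
def Qgate : Matrix (H6 d' d e) (H6 d' d e) ℂ :=
  Matrix.of fun (c, x, t, b, y, s) (c', x', t', b', y', s') =>
    (if c = 1 ∧ c' = 1 ∧ x = y' ∧ y = x' ∧ t = s' ∧ s = t' ∧ b = b' then 1 else 0) +
    (if c = 0 ∧ c' = 0 ∧ x = x' ∧ t = t' ∧ b = b' ∧ y = y' ∧ s = s' then 1 else 0)

/-- Q̄ := |0⟩⟨0|_c ⊗ SWAP_{A',a₁} SWAP_{t,a₂} + |1⟩⟨1|_c ⊗ 1. -/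
def Qbar : Matrix (H6 d' d e) (H6 d' d e) ℂ :=
  Matrix.of fun (c, x, t, b, y, s) (c', x', t', b', y', s') =>
    (if c = 0 ∧ c' = 0 ∧ x = y' ∧ y = x' ∧ t = s' ∧ s = t' ∧ b = b' then 1 else 0) +
    (if c = 1 ∧ c' = 1 ∧ x = x' ∧ t = t' ∧ b = b' ∧ y = y' ∧ s = s' then 1 else 0)

/-- U acting on the factors (A', t) of H6, identity elsewhere. -/
def Uact6 (U : Matrix (Fin d' × Fin d) (Fin d' × Fin d) ℂ) : Matrix (H6 d' d e) (H6 d' d e) ℂ :=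
  Matrix.of fun (c, x, t, b, y, s) (c', x', t', b', y', s') =>
    U (x, t) (x', t') * (if c = c' ∧ b = b' ∧ y = y' ∧ s = s' then 1 else 0)

/-- A Kraus operator K acting on the factors (t, B') of H6, identity elsewhere. -/
def Bact6 (K : Matrix (Fin d × Fin e) (Fin d × Fin e) ℂ) : Matrix (H6 d' d e) (H6 d' d e) ℂ :=
  Matrix.of fun (c, x, t, b, y, s) (c', x', t', b', y', s') =>
    K (t, b) (t', b') * (if c = c' ∧ x = x' ∧ y = y' ∧ s = s' then 1 else 0)

/-- U acting on the auxiliary factors (a₁, a₂) of H6, identity elsewhere. -/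
def Uaux6 (U : Matrix (Fin d' × Fin d) (Fin d' × Fin d) ℂ) : Matrix (H6 d' d e) (H6 d' d e) ℂ :=
  Matrix.of fun (c, x, t, b, y, s) (c', x', t', b', y', s') =>
    U (y, s) (y', s') * (if c = c' ∧ x = x' ∧ t = t' ∧ b = b' then 1 else 0)

/-- The circuit Kraus operator C_j := Q̄ · U_{(A',t)} · Q̄ · (B_j)_{(t,B')} · Q · U_{(A',t)} · Q. -/
def circuitKraus (U : Matrix (Fin d' × Fin d) (Fin d' × Fin d) ℂ)
    (K : Matrix (Fin d × Fin e) (Fin d × Fin e) ℂ) : Matrix (H6 d' d e) (H6 d' d e) ℂ :=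
  Qbar d' d e * Uact6 d' d e U * Qbar d' d e * Bact6 d' d e K *
    Qgate d' d e * Uact6 d' d e U * Qgate d' d e

/-- U acting on the factors (A', t) of H4, identity elsewhere. -/
def Uact4 (U : Matrix (Fin d' × Fin d) (Fin d' × Fin d) ℂ) : Matrix (H4 d' d e) (H4 d' d e) ℂ :=
  Matrix.of fun (c, x, t, b) (c', x', t', b') =>
    U (x, t) (x', t') * (if c = c' ∧ b = b' then 1 else 0)

/-- A Kraus operator K acting on the factors (t, B') of H4, identity elsewhere. -/
def Bact4 (K : Matrix (Fin d × Fin e) (Fin d × Fin e) ℂ) : Matrix (H4 d' d e) (H4 d' d e) ℂ :=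
  Matrix.of fun (c, x, t, b) (c', x', t', b') =>
    K (t, b) (t', b') * (if c = c' ∧ x = x' then 1 else 0)

/-- The projector |v⟩⟨v|_c ⊗ 1 on H4. -/
def projC (v : Fin 2) : Matrix (H4 d' d e) (H4 d' d e) ℂ :=
  Matrix.of fun (c, x, t, b) (c', x', t', b') =>
    if c = v ∧ c' = v ∧ x = x' ∧ t = t' ∧ b = b' then 1 else 0

/-- The switch Kraus operator
S_j := |0⟩⟨0|_c ⊗ (B_j)_{(t,B')} U_{(A',t)} + |1⟩⟨1|_c ⊗ U_{(A',t)} (B_j)_{(t,B')}. -/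
def switchKraus (U : Matrix (Fin d' × Fin d) (Fin d' × Fin d) ℂ)
    (K : Matrix (Fin d × Fin e) (Fin d × Fin e) ℂ) : Matrix (H4 d' d e) (H4 d' d e) ℂ :=
  projC d' d e 0 * (Bact4 d' d e K * Uact4 d' d e U) +
    projC d' d e 1 * (Uact4 d' d e U * Bact4 d' d e K)

/-- An operator on the factors (c, A', t, B') of H6, identity on (a₁, a₂). -/
def embed4 (S : Matrix (H4 d' d e) (H4 d' d e) ℂ) : Matrix (H6 d' d e) (H6 d' d e) ℂ :=
  Matrix.of fun (c, x, t, b, y, s) (c', x', t', b', y', s') =>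
    S (c, x, t, b) (c', x', t', b') * (if y = y' ∧ s = s' then 1 else 0)

/-- Kronecker product ρ ⊗ ω of a state on (c, A', t, B') with a state on (a₁, a₂). -/
def kronState (ρ : Matrix (H4 d' d e) (H4 d' d e) ℂ)
    (ω : Matrix (Fin d' × Fin d) (Fin d' × Fin d) ℂ) : Matrix (H6 d' d e) (H6 d' d e) ℂ :=
  Matrix.of fun (c, x, t, b, y, s) (c', x', t', b', y', s') =>
    ρ (c, x, t, b) (c', x', t', b') * ω (y, s) (y', s')

/-- Partial trace over the auxiliary factors (a₁, a₂). -/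
def ptraceAux (M : Matrix (H6 d' d e) (H6 d' d e) ℂ) : Matrix (H4 d' d e) (H4 d' d e) ℂ :=
  Matrix.of fun (c, x, t, b) (c', x', t', b') =>
    ∑ y : Fin d', ∑ s : Fin d, M (c, x, t, b, y, s) (c', x', t', b', y, s)

lemma Qgate_mul_apply (M : Matrix (H6 d' d e) (H6 d' d e) ℂ)
    (c : Fin 2) (x : Fin d') (t : Fin d) (b : Fin e) (y : Fin d') (s : Fin d)
    (col : H6 d' d e) :
    (Qgate d' d e * M) (c, x, t, b, y, s) col =
      if c = 1 then M (c, y, s, b, x, t) col else M (c, x, t, b, y, s) col := by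
  rw [Matrix.mul_apply]
  fin_cases c <;>
  simp [Qgate, Fintype.sum_prod_type, ite_and, add_mul, Finset.sum_add_distrib]

lemma Qbar_mul_apply (M : Matrix (H6 d' d e) (H6 d' d e) ℂ)
    (c : Fin 2) (x : Fin d') (t : Fin d) (b : Fin e) (y : Fin d') (s : Fin d)
    (col : H6 d' d e) :
    (Qbar d' d e * M) (c, x, t, b, y, s) col =
      if c = 0 then M (c, y, s, b, x, t) col else M (c, x, t, b, y, s) col := by
  rw [Matrix.mul_apply]
  fin_cases c <;>
  simp [Qbar, Fintype.sum_prod_type, ite_and, add_mul, Finset.sum_add_distrib]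

lemma Uact6_mul_apply (U : Matrix (Fin d' × Fin d) (Fin d' × Fin d) ℂ)
    (M : Matrix (H6 d' d e) (H6 d' d e) ℂ)
    (c : Fin 2) (x : Fin d') (t : Fin d) (b : Fin e) (y : Fin d') (s : Fin d)
    (col : H6 d' d e) :
    (Uact6 d' d e U * M) (c, x, t, b, y, s) col =
      ∑ p : Fin d', ∑ q : Fin d, U (x, t) (p, q) * M (c, p, q, b, y, s) col := by
  rw [Matrix.mul_apply]
  simp [Uact6, Fintype.sum_prod_type, ite_and, mul_ite, mul_assoc]

lemma Bact6_mul_apply (K : Matrix (Fin d × Fin e) (Fin d × Fin e) ℂ)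
    (M : Matrix (H6 d' d e) (H6 d' d e) ℂ)
    (c : Fin 2) (x : Fin d') (t : Fin d) (b : Fin e) (y : Fin d') (s : Fin d)
    (col : H6 d' d e) :
    (Bact6 d' d e K * M) (c, x, t, b, y, s) col =
      ∑ p : Fin d, ∑ q : Fin e, K (t, b) (p, q) * M (c, x, p, q, y, s) col := by
  rw [Matrix.mul_apply]
  simp [Bact6, Fintype.sum_prod_type, ite_and, mul_ite, mul_assoc]

lemma embed4_mul_Uaux6_apply (S : Matrix (H4 d' d e) (H4 d' d e) ℂ)
    (V : Matrix (Fin d' × Fin d) (Fin d' × Fin d) ℂ)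
    (c : Fin 2) (x : Fin d') (t : Fin d) (b : Fin e) (y : Fin d') (s : Fin d)
    (c' : Fin 2) (x' : Fin d') (t' : Fin d) (b' : Fin e) (y' : Fin d') (s' : Fin d) :
    (embed4 d' d e S * Uaux6 d' d e V) (c, x, t, b, y, s) (c', x', t', b', y', s') =
      S (c, x, t, b) (c', x', t', b') * V (y, s) (y', s') := by
  rw [Matrix.mul_apply]
  simp [embed4, Uaux6, Fintype.sum_prod_type, ite_and, mul_ite, ite_mul, mul_comm]

lemma switchKraus_apply_zero (U : Matrix (Fin d' × Fin d) (Fin d' × Fin d) ℂ)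
    (K : Matrix (Fin d × Fin e) (Fin d × Fin e) ℂ)
    (x : Fin d') (t : Fin d) (b : Fin e)
    (c' : Fin 2) (x' : Fin d') (t' : Fin d) (b' : Fin e) :
    switchKraus d' d e U K (0, x, t, b) (c', x', t', b') =
      if c' = 0 then ∑ p : Fin d, K (t, b) (p, b') * U (x, p) (x', t') else 0 := by
  simp only [switchKraus, Matrix.add_apply, Matrix.mul_apply]
  fin_cases c' <;>
  simp [projC, Bact4, Uact4, Fintype.sum_prod_type, ite_and, mul_ite, ite_mul]

lemma switchKraus_apply_one (U : Matrix (Fin d' × Fin d) (Fin d' × Fin d) ℂ)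
    (K : Matrix (Fin d × Fin e) (Fin d × Fin e) ℂ)
    (x : Fin d') (t : Fin d) (b : Fin e)
    (c' : Fin 2) (x' : Fin d') (t' : Fin d) (b' : Fin e) :
    switchKraus d' d e U K (1, x, t, b) (c', x', t', b') =
      if c' = 1 then ∑ p : Fin d, U (x, t) (x', p) * K (p, b) (t', b') else 0 := by
  simp only [switchKraus, Matrix.add_apply, Matrix.mul_apply]
  fin_cases c' <;>
  simp [projC, Bact4, Uact4, Fintype.sum_prod_type, ite_and, mul_ite, ite_mul]

lemma embed4_mul_kron (S : Matrix (H4 d' d e) (H4 d' d e) ℂ)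
    (ρ : Matrix (H4 d' d e) (H4 d' d e) ℂ)
    (ω : Matrix (Fin d' × Fin d) (Fin d' × Fin d) ℂ) :
    embed4 d' d e S * kronState d' d e ρ ω = kronState d' d e (S * ρ) ω := by
  ext ⟨c, x, t, b, y, s⟩ ⟨c', x', t', b', y', s'⟩
  simp [Matrix.mul_apply, embed4, kronState, Fintype.sum_prod_type, ite_and,
    Finset.sum_mul, Finset.mul_sum, mul_ite, ite_mul, add_mul, mul_add]
  congr 1 <;>
  exact Finset.sum_congr rfl fun _ _ => Finset.sum_congr rfl fun _ _ =>
    Finset.sum_congr rfl fun _ _ => by ring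

lemma kron_mul_embed4 (S : Matrix (H4 d' d e) (H4 d' d e) ℂ)
    (ρ : Matrix (H4 d' d e) (H4 d' d e) ℂ)
    (ω : Matrix (Fin d' × Fin d) (Fin d' × Fin d) ℂ) :
    kronState d' d e ρ ω * embed4 d' d e S = kronState d' d e (ρ * S) ω := by
  ext ⟨c, x, t, b, y, s⟩ ⟨c', x', t', b', y', s'⟩
  simp [Matrix.mul_apply, embed4, kronState, Fintype.sum_prod_type, ite_and,
    Finset.sum_mul, Finset.mul_sum, mul_ite, ite_mul, add_mul, mul_add]
  congr 1 <;>
  exact Finset.sum_congr rfl fun _ _ => Finset.sum_congr rfl fun _ _ =>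
    Finset.sum_congr rfl fun _ _ => by ring

lemma Uaux6_mul_kron (V : Matrix (Fin d' × Fin d) (Fin d' × Fin d) ℂ)
    (ρ : Matrix (H4 d' d e) (H4 d' d e) ℂ)
    (ω : Matrix (Fin d' × Fin d) (Fin d' × Fin d) ℂ) :
    Uaux6 d' d e V * kronState d' d e ρ ω = kronState d' d e ρ (V * ω) := by
  ext ⟨c, x, t, b, y, s⟩ ⟨c', x', t', b', y', s'⟩
  simp [Matrix.mul_apply, Uaux6, kronState, Fintype.sum_prod_type, ite_and,
    Finset.sum_mul, Finset.mul_sum, mul_ite, ite_mul, add_mul, mul_add]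
  exact Finset.sum_congr rfl fun _ _ => Finset.sum_congr rfl fun _ _ => by ring

lemma kron_mul_Uaux6 (V : Matrix (Fin d' × Fin d) (Fin d' × Fin d) ℂ)
    (ρ : Matrix (H4 d' d e) (H4 d' d e) ℂ)
    (ω : Matrix (Fin d' × Fin d) (Fin d' × Fin d) ℂ) :
    kronState d' d e ρ ω * Uaux6 d' d e V = kronState d' d e ρ (ω * V) := by
  ext ⟨c, x, t, b, y, s⟩ ⟨c', x', t', b', y', s'⟩
  simp [Matrix.mul_apply, Uaux6, kronState, Fintype.sum_prod_type, ite_and,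
    Finset.sum_mul, Finset.mul_sum, mul_ite, ite_mul, add_mul, mul_add]
  exact Finset.sum_congr rfl fun _ _ => Finset.sum_congr rfl fun _ _ => by ring


lemma embed4_conjT (S : Matrix (H4 d' d e) (H4 d' d e) ℂ) :
    (embed4 d' d e S)ᴴ = embed4 d' d e Sᴴ := by
  ext ⟨c, x, t, b, y, s⟩ ⟨c', x', t', b', y', s'⟩
  simp only [embed4, Matrix.conjTranspose_apply, Matrix.of_apply, map_mul,
    apply_ite (starRingEnd ℂ), map_one, map_zero]
  by_cases h1 : y = y' <;> by_cases h2 : s = s' <;> simp [h1, h2, eq_comm]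

lemma Uaux6_conjT (V : Matrix (Fin d' × Fin d) (Fin d' × Fin d) ℂ) :
    (Uaux6 d' d e V)ᴴ = Uaux6 d' d e Vᴴ := by
  ext ⟨c, x, t, b, y, s⟩ ⟨c', x', t', b', y', s'⟩
  simp only [Uaux6, Matrix.conjTranspose_apply, Matrix.of_apply, map_mul,
    apply_ite (starRingEnd ℂ), map_one, map_zero]
  by_cases h1 : c = c' <;> by_cases h2 : x = x' <;> by_cases h3 : t = t' <;>
    by_cases h4 : b = b' <;> simp [h1, h2, h3, h4, eq_comm]

lemma ptraceAux_kron (σ : Matrix (H4 d' d e) (H4 d' d e) ℂ)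
    (τ : Matrix (Fin d' × Fin d) (Fin d' × Fin d) ℂ) :
    ptraceAux d' d e (kronState d' d e σ τ) = τ.trace • σ := by
  ext ⟨c, x, t, b⟩ ⟨c', x', t', b'⟩
  simp [ptraceAux, kronState, Matrix.trace, Matrix.diag, Fintype.sum_prod_type,
    Finset.sum_mul, Finset.mul_sum, mul_comm]

lemma ptraceAux_add (M N : Matrix (H6 d' d e) (H6 d' d e) ℂ) :
    ptraceAux d' d e (M + N) = ptraceAux d' d e M + ptraceAux d' d e N := by
  ext ⟨c, x, t, b⟩ ⟨c', x', t', b'⟩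
  simp [ptraceAux, Finset.sum_add_distrib]

lemma ptraceAux_zero : ptraceAux d' d e 0 = 0 := by
  ext ⟨c, x, t, b⟩ ⟨c', x', t', b'⟩
  simp [ptraceAux]

lemma ptraceAux_sum {J : Type} [Fintype J] (M : J → Matrix (H6 d' d e) (H6 d' d e) ℂ) :
    ptraceAux d' d e (∑ j : J, M j) = ∑ j : J, ptraceAux d' d e (M j) :=
  map_sum (⟨⟨ptraceAux d' d e, ptraceAux_zero d' d e⟩, ptraceAux_add d' d e⟩ :
    Matrix (H6 d' d e) (H6 d' d e) ℂ →+ Matrix (H4 d' d e) (H4 d' d e) ℂ) M Finset.univ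

lemma circuit_factor (U : Matrix (Fin d' × Fin d) (Fin d' × Fin d) ℂ)
    (K : Matrix (Fin d × Fin e) (Fin d × Fin e) ℂ) :
    circuitKraus d' d e U K = embed4 d' d e (switchKraus d' d e U K) * Uaux6 d' d e U := by
  ext ⟨c, x, t, b, y, s⟩ ⟨c', x', t', b', y', s'⟩
  rw [embed4_mul_Uaux6_apply]
  simp only [circuitKraus, mul_assoc]
  fin_cases c <;> fin_cases c' <;>
  · simp only [Qbar_mul_apply, Qgate_mul_apply, Uact6_mul_apply, Bact6_mul_apply,
      Fin.isValue]
    simp [switchKraus_apply_zero, switchKraus_apply_one, Qgate, ite_and,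
      Finset.mul_sum, Finset.sum_mul, mul_ite, ite_mul]
    try (apply Finset.sum_congr rfl; intros; ring)

/-- Theorem 1: the circuit in Eq. (9) deterministically simulates the action of the quantum
switch on part of a bipartite unitary channel U and part of a bipartite general channel
with Kraus operators {B_j}: each C_j factorizes as (S_j)_{(c,A',t,B')} · U_{(a₁,a₂)}, and
hence, after discarding the auxiliary systems, the circuit output equals the switch output
on every input state. -/
theorem switch_go_theorem (hd' : 1 ≤ d') (hd : 1 ≤ d) (he : 1 ≤ e)
    (U : Matrix (Fin d' × Fin d) (Fin d' × Fin d) ℂ)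
    (hU : U ∈ Matrix.unitaryGroup (Fin d' × Fin d) ℂ)
    {J : Type} [Fintype J]
    (B : J → Matrix (Fin d × Fin e) (Fin d × Fin e) ℂ)
    (hB : ∑ j : J, (B j)ᴴ * B j = 1) :
    (∀ j : J, circuitKraus d' d e U (B j)
        = embed4 d' d e (switchKraus d' d e U (B j)) * Uaux6 d' d e U) ∧
    (∀ ρ : Matrix (H4 d' d e) (H4 d' d e) ℂ, ρ.PosSemidef → ρ.trace = 1 →
      ∀ ω : Matrix (Fin d' × Fin d) (Fin d' × Fin d) ℂ, ω.PosSemidef → ω.trace = 1 →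
        ptraceAux d' d e (∑ j : J,
            circuitKraus d' d e U (B j) * kronState d' d e ρ ω * (circuitKraus d' d e U (B j))ᴴ)
          = ∑ j : J, switchKraus d' d e U (B j) * ρ * (switchKraus d' d e U (B j))ᴴ) := by
  have hfac : ∀ j : J, circuitKraus d' d e U (B j)
      = embed4 d' d e (switchKraus d' d e U (B j)) * Uaux6 d' d e U :=
    fun j => circuit_factor d' d e U (B j)
  refine ⟨hfac, ?_⟩
  intro ρ _ _ ω _ hω
  have h1 : Uᴴ * U = 1 := by
    simpa [Matrix.star_eq_conjTranspose] using hU.1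
  have htr : (U * ω * Uᴴ).trace = 1 := by
    rw [Matrix.trace_mul_cycle, h1, one_mul, hω]
  have hterm : ∀ j : J,
      circuitKraus d' d e U (B j) * kronState d' d e ρ ω * (circuitKraus d' d e U (B j))ᴴ
        = kronState d' d e
            (switchKraus d' d e U (B j) * ρ * (switchKraus d' d e U (B j))ᴴ)
            (U * ω * Uᴴ) := by
    intro j
    rw [hfac j, Matrix.conjTranspose_mul, Uaux6_conjT, embed4_conjT]
    calc embed4 d' d e (switchKraus d' d e U (B j)) * Uaux6 d' d e U * kronState d' d e ρ ω *
          ((Uaux6 d' d e Uᴴ) * embed4 d' d e (switchKraus d' d e U (B j))ᴴ)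
        = embed4 d' d e (switchKraus d' d e U (B j)) *
            (Uaux6 d' d e U * kronState d' d e ρ ω * Uaux6 d' d e Uᴴ) *
            embed4 d' d e (switchKraus d' d e U (B j))ᴴ := by
          simp only [mul_assoc]
      _ = kronState d' d e
            (switchKraus d' d e U (B j) * ρ * (switchKraus d' d e U (B j))ᴴ)
            (U * ω * Uᴴ) := by
          rw [Uaux6_mul_kron, kron_mul_Uaux6, embed4_mul_kron, kron_mul_embed4]
  simp only [hterm]
  rw [ptraceAux_sum]
  simp only [ptraceAux_kron, htr, one_smul]
end
end

section
/- (Basis for two identical copies of a qubit channel, Eq. (26).) The ℝ-linear span of the set {J ⊗ J : J a qubit-channel Choi operator}, inside the Hermitian matrices on (ℂ²⊗ℂ²)⊗(ℂ²⊗ℂ²), has dimension 91 = C(14,2), and it equals the ℝ-linear span of the set B₂ := {(1⊗(1/2)·1)^{⊗2}} ∪ {(ρ + σ⊗τ)^{⊗2}, (ρ − σ⊗τ)^{⊗2} : ρ ∈ P, σ ∈ ΣI, τ ∈ ΣO} ∪ {(ρ + σ⊗τ + σ'⊗τ')^{⊗2} : ρ ∈ P, σ,σ' ∈ ΣI, τ,τ'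 ∈ ΣO}, where P := {1⊗(1/2)·1, 2|φ⁺⟩⟨φ⁺|, 1⊗|0⟩⟨0|, 1⊗|+⟩⟨+|, 1⊗|+_Y⟩⟨+_Y|}, ΣI := {1, X, Y, Z}, ΣO := {X, Y, Z}. In particular B₂ contains a subset of 91 linearly independent matrices forming a basis of that span. -/
open scoped BigOperators ComplexOrder Kronecker

noncomputable section

/-- Pauli X. -/
def pauliX : Matrix (Fin 2) (Fin 2) ℂ := !![0, 1; 1, 0]
/-- Pauli Y. -/
def pauliY : Matrix (Fin 2) (Fin 2) ℂ := !![0, -Complex.I; Complex.I, 0]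
/-- Pauli Z. -/
def pauliZ : Matrix (Fin 2) (Fin 2) ℂ := !![1, 0; 0, -1]

/-- The input-side family ΣI = {1, X, Y, Z}. -/
def sigmaI : Fin 4 → Matrix (Fin 2) (Fin 2) ℂ := ![1, pauliX, pauliY, pauliZ]
/-- The output-side family ΣO = {X, Y, Z}. -/
def sigmaO : Fin 3 → Matrix (Fin 2) (Fin 2) ℂ := ![pauliX, pauliY, pauliZ]

/-- Partial trace over the (second) output factor of a matrix on ℂ²⊗ℂ². -/
def ptraceO (M : Matrix (Fin 2 × Fin 2) (Fin 2 × Fin 2) ℂ) : Matrix (Fin 2) (Fin 2) ℂ :=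
  Matrix.of fun i i' => ∑ o : Fin 2, M (i, o) (i', o)

/-- A qubit-channel Choi operator: positive semidefinite with output partial trace 1₂. -/
def IsChoi (J : Matrix (Fin 2 × Fin 2) (Fin 2 × Fin 2) ℂ) : Prop :=
  J.PosSemidef ∧ ptraceO J = 1

/-- Rank-one projector |v⟩⟨v| onto a vector. -/
def proj {n : Type*} (v : n → ℂ) : Matrix n n ℂ :=
  Matrix.of fun x y => v x * star (v y)

/-- |0⟩. -/
def ket0 : Fin 2 → ℂ := ![1, 0]
/-- |+⟩ = (|0⟩+|1⟩)/√2. -/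
def ketPlus : Fin 2 → ℂ := ![(Real.sqrt 2 : ℂ)⁻¹, (Real.sqrt 2 : ℂ)⁻¹]
/-- |+_Y⟩ = (|0⟩+i|1⟩)/√2. -/
def ketPlusY : Fin 2 → ℂ := ![(Real.sqrt 2 : ℂ)⁻¹, (Real.sqrt 2 : ℂ)⁻¹ * Complex.I]
/-- |φ⁺⟩ = (|00⟩+|11⟩)/√2. -/
def ketPhiPlus : Fin 2 × Fin 2 → ℂ := fun x => if x.1 = x.2 then (Real.sqrt 2 : ℂ)⁻¹ else 0

/-- The family P = {1⊗(1/2)1, 2|φ⁺⟩⟨φ⁺|, 1⊗|0⟩⟨0|, 1⊗|+⟩⟨+|, 1⊗|+_Y⟩⟨+_Y|}. -/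
def Pfam : Fin 5 → Matrix (Fin 2 × Fin 2) (Fin 2 × Fin 2) ℂ :=
  ![(1 : Matrix (Fin 2) (Fin 2) ℂ) ⊗ₖ ((1 / 2 : ℂ) • (1 : Matrix (Fin 2) (Fin 2) ℂ)),
    (2 : ℂ) • proj ketPhiPlus,
    (1 : Matrix (Fin 2) (Fin 2) ℂ) ⊗ₖ proj ket0,
    (1 : Matrix (Fin 2) (Fin 2) ℂ) ⊗ₖ proj ketPlus,
    (1 : Matrix (Fin 2) (Fin 2) ℂ) ⊗ₖ proj ketPlusY]

/-- Tensor (Kronecker) square M ⊗ M. -/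
def tsq (M : Matrix (Fin 2 × Fin 2) (Fin 2 × Fin 2) ℂ) :
    Matrix ((Fin 2 × Fin 2) × (Fin 2 × Fin 2)) ((Fin 2 × Fin 2) × (Fin 2 × Fin 2)) ℂ :=
  M ⊗ₖ M

/-- The family B₂ of Eq. (26): {(1⊗(1/2)1)^{⊗2}} ∪ {(ρ ± σ⊗τ)^{⊗2}} ∪
{(ρ + σ⊗τ + σ'⊗τ')^{⊗2}}. -/
def B2 : Unit ⊕ Fin 5 × Fin 4 × Fin 3 × Bool ⊕ Fin 5 × (Fin 4 × Fin 3) × (Fin 4 × Fin 3) →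
    Matrix ((Fin 2 × Fin 2) × (Fin 2 × Fin 2)) ((Fin 2 × Fin 2) × (Fin 2 × Fin 2)) ℂ
  | Sum.inl _ =>
      tsq ((1 : Matrix (Fin 2) (Fin 2) ℂ) ⊗ₖ ((1 / 2 : ℂ) • (1 : Matrix (Fin 2) (Fin 2) ℂ)))
  | Sum.inr (Sum.inl (r, i, o, sgn)) =>
      tsq (Pfam r + (if sgn then (1 : ℂ) else -1) • (sigmaI i ⊗ₖ sigmaO o))
  | Sum.inr (Sum.inr (r, (i, o), (i', o'))) =>
      tsq (Pfam r + sigmaI i ⊗ₖ sigmaO o + sigmaI i' ⊗ₖ sigmaO o')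

/-- The span (over ℝ) of two identical copies of qubit-channel Choi operators. -/
def twoCopySpan : Submodule ℝ
    (Matrix ((Fin 2 × Fin 2) × (Fin 2 × Fin 2)) ((Fin 2 × Fin 2) × (Fin 2 × Fin 2)) ℂ) :=
  Submodule.span ℝ {M | ∃ J, IsChoi J ∧ M = J ⊗ₖ J}


/-!
The Choi operators of qubit channels span, over ℝ, the 13-dimensional space `U` with basis
`e₀ = ½·1` and the twelve Pauli products `σ_a ⊗ σ_o` whose output factor is traceless: expanding
a Hermitian `J` in the Pauli basis, the condition `Tr_O J = 1` fixes the coefficients of the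
`σ_a ⊗ 1` to be those of `½·1`. The span of the squares `J ⊗ J` is therefore spanned by the
symmetrized products `e ⊗ f + f ⊗ e` of basis vectors of `U`. These are orthogonal for the trace
form, hence linearly independent, and there are `C(14,2) = 91` of them.

Conversely, polarization recovers every symmetrized product from the squares of `e₀`,
`e₀ + c v` and `e₀ + c v + c w` (`v`, `w` traceless-output Pauli products, `c ≠ 0`). For
`c = 1/4` these are Choi operators; for `c = 1` they lie in `B₂`, giving a 91-element basis
inside `B₂`. Every element of `B₂` is the square of an element of `U`, because every member of
`P` is a Choi operator.
-/

open Set Submodule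

section Polarization

variable {K M N ι : Type*} [Field K] [NeZero (2 : K)] [AddCommGroup M] [Module K M]
  [AddCommGroup N] [Module K N] (B : M →ₗ[K] M →ₗ[K] N)

theorem LinearMap.apply_self_mem_span_image2 {s : Set M} {x : M} (hx : x ∈ span K s) :
    B x x ∈ span K (image2 (fun a b => B a b + B b a) s s) := by
  have h := apply_mem_map₂ (B + B.flip) hx hx
  rw [map₂_span_span] at h
  rw [← smul_mem_iff _ (two_ne_zero (α := K)), two_smul]
  exact h

theorem LinearMap.apply_add_apply_swap_mem_of_apply_self_mem {T : Submodule K N} {e₀ : M}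
    {v : ι → M} {c : K} (hc : c ≠ 0)
    (h : ∀ a b : Option ι,
      B (e₀ + c • a.elim 0 v + c • b.elim 0 v) (e₀ + c • a.elim 0 v + c • b.elim 0 v) ∈ T)
    (a b : Option ι) :
    B (a.elim e₀ v) (b.elim e₀ v) + B (b.elim e₀ v) (a.elim e₀ v) ∈ T := by
  have h₀ : B e₀ e₀ ∈ T := by simpa using h none none
  have h₁ (i : ι) : B (e₀ + c • v i) (e₀ + c • v i) ∈ T := by simpa using h (some i) none
  have h₂ (i j : ι) := h (some i) (some j)
  have hmixed (i : ι) : B e₀ (v i) + B (v i) e₀ ∈ T := by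
    rw [← smul_mem_iff T (mul_ne_zero two_ne_zero hc)]
    have key : (2 * c) • (B e₀ (v i) + B (v i) e₀) = (4 : K) • B (e₀ + c • v i) (e₀ + c • v i)
        - (3 : K) • B e₀ e₀ - B (e₀ + c • v i + c • v i) (e₀ + c • v i + c • v i) := by
      simp only [map_add, map_smul, LinearMap.add_apply, LinearMap.smul_apply]
      module
    rw [key]
    exact T.sub_mem (T.sub_mem (T.smul_mem _ (h₁ i)) (T.smul_mem _ h₀)) (h₂ i i)
  rcases a with _ | i <;> rcases b with _ | j <;> simp only [Option.elim_none, Option.elim_some]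
  · rw [← two_smul K]
    exact T.smul_mem _ h₀
  · exact hmixed j
  · exact add_comm (B e₀ (v i)) _ ▸ hmixed i
  · rw [← smul_mem_iff T (pow_ne_zero 2 hc)]
    have key : c ^ 2 • (B (v i) (v j) + B (v j) (v i)) =
        B (e₀ + c • v i + c • v j) (e₀ + c • v i + c • v j) - B (e₀ + c • v i) (e₀ + c • v i)
          - B (e₀ + c • v j) (e₀ + c • v j) + B e₀ e₀ := by
      simp only [map_add, map_smul, LinearMap.add_apply, LinearMap.smul_apply]
      module
    rw [key]
    exact T.add_mem (T.sub_mem (T.sub_mem (h₂ i j) (h₁ i)) (h₁ j)) h₀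

end Polarization

namespace Matrix

variable {ι m n α : Type*}

def symKron [Semiring α] (e : ι → Matrix m n α) : Sym2 ι → Matrix (m × m) (n × n) α :=
  Sym2.lift ⟨fun a b => e a ⊗ₖ e b + e b ⊗ₖ e a, fun _ _ => add_comm _ _⟩

@[simp]
theorem symKron_mk [Semiring α] (e : ι → Matrix m n α) (a b : ι) :
    symKron e s(a, b) = e a ⊗ₖ e b + e b ⊗ₖ e a := rfl

section Span

variable {K : Type*} [Field K] [NeZero (2 : K)] [Ring α] [Algebra K α]

theorem kronecker_self_mem_span_symKron {e : ι → Matrix m n α} {x : Matrix m n α}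
    (hx : x ∈ span K (range e)) : x ⊗ₖ x ∈ span K (range (symKron e)) := by
  refine span_mono ?_ ((kroneckerBilinear (R := K) : Matrix m n α →ₗ[K] Matrix m n α →ₗ[K] _)
    |>.apply_self_mem_span_image2 hx)
  rintro _ ⟨_, ⟨a, rfl⟩, _, ⟨b, rfl⟩, rfl⟩
  exact ⟨s(a, b), rfl⟩

theorem span_symKron_option_elim_le {T : Submodule K (Matrix (m × m) (n × n) α)}
    {e₀ : Matrix m n α} {v : ι → Matrix m n α} {c : K} (hc : c ≠ 0)
    (h : ∀ a b : Option ι,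
      (e₀ + c • a.elim 0 v + c • b.elim 0 v) ⊗ₖ (e₀ + c • a.elim 0 v + c • b.elim 0 v) ∈ T) :
    span K (range (symKron fun a : Option ι => a.elim e₀ v)) ≤ T :=
  span_le.2 <| range_subset_iff.2 <| Sym2.ind fun a b =>
    (kroneckerBilinear (R := K) : Matrix m n α →ₗ[K] Matrix m n α →ₗ[K] _)
      |>.apply_add_apply_swap_mem_of_apply_self_mem hc h a b

end Span

section TraceForm

variable {K : Type*} [Field K] [Fintype n]

def traceForm : Matrix n n K →ₗ[K] Matrix n n K →ₗ[K] K :=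
  (LinearMap.mul K (Matrix n n K)).compr₂ (traceLinearMap n K K)

theorem traceForm_apply (A B : Matrix n n K) : traceForm A B = (A * B).trace := rfl

theorem trace_kronecker_mul_kronecker {m : Type*} [Fintype m] (A C : Matrix m m K)
    (B D : Matrix n n K) : (A ⊗ₖ B * (C ⊗ₖ D)).trace = (A * C).trace * (B * D).trace := by
  rw [← mul_kronecker_mul, trace_kronecker]

variable [DecidableEq ι] {e : ι → Matrix n n K} {d : ι → K}

theorem linearIndependent_of_trace_mul_eq_ite
    (he : ∀ i j, (e i * e j).trace = if i = j then d i else 0) (hd : ∀ i, d i ≠ 0) :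
    LinearIndependent K e :=
  LinearMap.linearIndependent_of_isOrthoᵢ (B := traceForm)
    (fun i j hij => by simp [Function.onFun, traceForm_apply, he, hij])
    (fun i => by simp [traceForm_apply, he, hd])

theorem eq_sum_trace_mul_div_smul [Fintype ι]
    (he : ∀ i j, (e i * e j).trace = if i = j then d i else 0) (hd : ∀ i, d i ≠ 0)
    (hcard : Fintype.card ι = Fintype.card n * Fintype.card n) (M : Matrix n n K) :
    M = ∑ i, ((e i * M).trace / d i) • e i := by
  have hspan := (linearIndependent_of_trace_mul_eq_ite he hd).span_eq_top_of_card_eq_finrank'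
    (by rw [Module.finrank_matrix, hcard, Module.finrank_self, mul_one])
  obtain ⟨c, rfl⟩ :=
    (mem_span_range_iff_exists_fun K).1 (hspan ▸ mem_top : M ∈ span K (range e))
  refine Finset.sum_congr rfl fun i _ => ?_
  simp [Finset.mul_sum, trace_sum, he, hd]

theorem linearIndependent_symKron [NeZero (2 : K)]
    (he : ∀ i j, (e i * e j).trace = if i = j then d i else 0) (hd : ∀ i, d i ≠ 0) :
    LinearIndependent K (symKron e) := by
  have htr (a b a' b' : ι) : (symKron e s(a, b) * symKron e s(a', b')).trace =
      2 * ((e a * e a').trace * (e b * e b').trace + (e a * e b').trace * (e b * e a').trace) := by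
    simp only [symKron_mk, add_mul, mul_add, trace_add, trace_kronecker_mul_kronecker]
    ring
  refine LinearMap.linearIndependent_of_isOrthoᵢ (B := traceForm) ?_ ?_
  · intro p q hpq
    induction p using Sym2.ind with | _ a b =>
    induction q using Sym2.ind with | _ a' b' =>
    rw [Ne, Sym2.eq_iff] at hpq
    simp only [Function.onFun, traceForm_apply, htr, he]
    split_ifs <;> simp_all
  · intro p
    induction p using Sym2.ind with | _ a b =>
    simp only [traceForm_apply, htr, he]
    by_cases hab : a = b <;> simp [hab, hd, ← two_mul, two_ne_zero]

end TraceForm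

section RCLike

variable {𝕜 : Type*} [RCLike 𝕜] [Fintype n]

theorem IsHermitian.trace_mul_eq_ofReal_re {A B : Matrix n n 𝕜} (hA : A.IsHermitian)
    (hB : B.IsHermitian) : (A * B).trace = (RCLike.re (A * B).trace : 𝕜) := by
  have h := trace_conjTranspose (A * B)
  rw [conjTranspose_mul, hA.eq, hB.eq, trace_mul_comm] at h
  exact (RCLike.conj_eq_iff_re.1 h.symm).symm

theorem posSemidef_one_add_of_mul_self_eq_one [DecidableEq n] {V : Matrix n n 𝕜}
    (hV : V.IsHermitian) (hV2 : V * V = 1) : (1 + V).PosSemidef := by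
  have h : 1 + V = (1 / 2 : ℝ) • ((1 + V)ᴴ * (1 + V)) := by
    simp only [conjTranspose_add, conjTranspose_one, hV.eq, add_mul, mul_add, hV2,
      Matrix.one_mul, Matrix.mul_one]
    module
  rw [h]
  exact (posSemidef_conjTranspose_mul_self _).smul (by norm_num)

end RCLike

end Matrix

open Matrix

abbrev M2 : Type := Matrix (Fin 2) (Fin 2) ℂ
abbrev M4 : Type := Matrix (Fin 2 × Fin 2) (Fin 2 × Fin 2) ℂ
abbrev M16 : Type :=
  Matrix ((Fin 2 × Fin 2) × (Fin 2 × Fin 2)) ((Fin 2 × Fin 2) × (Fin 2 × Fin 2)) ℂ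

theorem sigmaO_eq_sigmaI_succ (o : Fin 3) : sigmaO o = sigmaI o.succ := by
  fin_cases o <;> rfl

theorem isHermitian_sigmaI (a : Fin 4) : (sigmaI a).IsHermitian := by
  fin_cases a <;> ext i j <;> fin_cases i <;> fin_cases j <;>
    simp [sigmaI, pauliX, pauliY, pauliZ, conjTranspose_apply]

theorem sigmaI_mul_self (a : Fin 4) : sigmaI a * sigmaI a = 1 := by
  fin_cases a <;> ext i j <;> fin_cases i <;> fin_cases j <;>
    simp [sigmaI, pauliX, pauliY, pauliZ, mul_apply, Fin.sum_univ_two, one_apply]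

theorem trace_sigmaI_mul_sigmaI (a b : Fin 4) :
    (sigmaI a * sigmaI b).trace = if a = b then 2 else 0 := by
  fin_cases a <;> fin_cases b <;>
    simp [sigmaI, pauliX, pauliY, pauliZ, trace_fin_two] <;> norm_num

theorem trace_sigmaI (a : Fin 4) : (sigmaI a).trace = if a = 0 then 2 else 0 := by
  simpa [sigmaI] using trace_sigmaI_mul_sigmaI a 0

theorem trace_sigmaO (o : Fin 3) : (sigmaO o).trace = 0 := by
  simp [sigmaO_eq_sigmaI_succ, trace_sigmaI, Fin.succ_ne_zero]

def pauliPair (p : Fin 4 × Fin 4) : M4 := sigmaI p.1 ⊗ₖ sigmaI p.2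

theorem trace_pauliPair_mul_pauliPair (p q : Fin 4 × Fin 4) :
    (pauliPair p * pauliPair q).trace = if p = q then 4 else 0 := by
  rw [pauliPair, pauliPair, trace_kronecker_mul_kronecker, trace_sigmaI_mul_sigmaI,
    trace_sigmaI_mul_sigmaI]
  by_cases h₁ : p.1 = q.1 <;> by_cases h₂ : p.2 = q.2 <;> simp [h₁, h₂, Prod.ext_iff]
  norm_num

theorem isHermitian_pauliPair (p : Fin 4 × Fin 4) : (pauliPair p).IsHermitian := by
  rw [pauliPair, IsHermitian, conjTranspose_kronecker, (isHermitian_sigmaI _).eq,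
    (isHermitian_sigmaI _).eq]

theorem eq_sum_pauliPair (M : M4) : M = ∑ p, ((pauliPair p * M).trace / 4) • pauliPair p :=
  eq_sum_trace_mul_div_smul (d := fun _ => 4) trace_pauliPair_mul_pauliPair
    (fun _ => four_ne_zero) rfl M

theorem ptraceO_add (M N : M4) : ptraceO (M + N) = ptraceO M + ptraceO N := by
  ext; simp [ptraceO, Finset.sum_add_distrib]

theorem ptraceO_smul (r : ℝ) (M : M4) : ptraceO (r • M) = r • ptraceO M := by
  ext; simp [ptraceO]

theorem ptraceO_kronecker (A B : M2) : ptraceO (A ⊗ₖ B) = B.trace • A := by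
  ext; simp [ptraceO, trace, Fin.sum_univ_two]; ring

theorem trace_kronecker_one_mul (A : M2) (M : M4) :
    (A ⊗ₖ (1 : M2) * M).trace = (A * ptraceO M).trace := by
  simp [trace, mul_apply, ptraceO, one_apply, Fintype.sum_prod_type, Fin.sum_univ_two]
  ring

def depolChoi : M4 := (1 : M2) ⊗ₖ ((1 / 2 : ℂ) • (1 : M2))

def choiDir (p : Fin 4 × Fin 3) : M4 := sigmaI p.1 ⊗ₖ sigmaO p.2

-- `none ↦ ½·1`, `some (a, o) ↦ σ_a ⊗ σ_o`: a basis of the real span of the Choi operators.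
def choiFrame (a : Option (Fin 4 × Fin 3)) : M4 := a.elim depolChoi choiDir

theorem depolChoi_eq : depolChoi = (1 / 2 : ℝ) • (1 : M4) := by
  rw [depolChoi, kronecker_smul, one_kronecker_one]
  ext
  simp

theorem choiDir_eq_pauliPair (p : Fin 4 × Fin 3) : choiDir p = pauliPair (p.1, p.2.succ) := by
  rw [choiDir, pauliPair, sigmaO_eq_sigmaI_succ]

theorem isHermitian_choiDir (p : Fin 4 × Fin 3) : (choiDir p).IsHermitian :=
  choiDir_eq_pauliPair p ▸ isHermitian_pauliPair _

theorem choiDir_mul_self (p : Fin 4 × Fin 3) : choiDir p * choiDir p = 1 := by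
  rw [choiDir_eq_pauliPair, pauliPair, ← mul_kronecker_mul, sigmaI_mul_self, sigmaI_mul_self,
    one_kronecker_one]

theorem ptraceO_choiDir (p : Fin 4 × Fin 3) : ptraceO (choiDir p) = 0 := by
  rw [choiDir, ptraceO_kronecker, trace_sigmaO, zero_smul]

theorem trace_choiFrame_mul_choiFrame (a b : Option (Fin 4 × Fin 3)) :
    (choiFrame a * choiFrame b).trace = if a = b then a.elim 1 (fun _ => 4) else 0 := by
  rcases a with _ | p <;> rcases b with _ | q <;>
    simp only [choiFrame, Option.elim_none, Option.elim_some, depolChoi_eq, smul_mul, one_mul,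
      trace_smul, trace_one]
  · norm_num
  · simp [choiDir_eq_pauliPair, pauliPair, trace_kronecker, trace_sigmaI]
  · simp [choiDir_eq_pauliPair, pauliPair, trace_kronecker, trace_sigmaI]
  · simp [choiDir_eq_pauliPair, trace_pauliPair_mul_pauliPair, Prod.ext_iff]

theorem convex_setOf_isChoi : Convex ℝ {J : M4 | IsChoi J} := by
  rintro J ⟨hJ, hJt⟩ K ⟨hK, hKt⟩ a b ha hb hab
  refine ⟨(hJ.smul ha).add (hK.smul hb), ?_⟩
  rw [ptraceO_add, ptraceO_smul, ptraceO_smul, hJt, hKt, ← add_smul, hab, one_smul]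

theorem isChoi_one_kronecker {ρ : M2} (hρ : ρ.PosSemidef) (htr : ρ.trace = 1) :
    IsChoi (1 ⊗ₖ ρ) :=
  ⟨PosSemidef.one.kronecker hρ, by rw [ptraceO_kronecker, htr, one_smul]⟩

theorem isChoi_depolChoi : IsChoi depolChoi :=
  isChoi_one_kronecker (PosSemidef.one.smul (by norm_num [Complex.le_def]))
    (by simp [trace_smul])

theorem isChoi_depolChoi_add_half_smul_choiDir (p : Fin 4 × Fin 3) :
    IsChoi (depolChoi + (1 / 2 : ℝ) • choiDir p) := by
  refine ⟨?_, by rw [ptraceO_add, ptraceO_smul, ptraceO_choiDir, smul_zero, add_zero,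
    isChoi_depolChoi.2]⟩
  rw [depolChoi_eq, ← smul_add]
  exact (posSemidef_one_add_of_mul_self_eq_one (isHermitian_choiDir p)
    (choiDir_mul_self p)).smul (by norm_num)

theorem isChoi_depolChoi_add_quarter_smul (a b : Option (Fin 4 × Fin 3)) :
    IsChoi (depolChoi + (1 / 4 : ℝ) • a.elim 0 choiDir + (1 / 4 : ℝ) • b.elim 0 choiDir) := by
  have half (a : Option (Fin 4 × Fin 3)) :
      IsChoi (depolChoi + (1 / 2 : ℝ) • a.elim 0 choiDir) := by
    rcases a with _ | p
    · simpa using isChoi_depolChoi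
    · exact isChoi_depolChoi_add_half_smul_choiDir p
  rw [show depolChoi + (1 / 4 : ℝ) • a.elim 0 choiDir + (1 / 4 : ℝ) • b.elim 0 choiDir =
    (1 / 2 : ℝ) • (depolChoi + (1 / 2 : ℝ) • a.elim 0 choiDir) +
      (1 / 2 : ℝ) • (depolChoi + (1 / 2 : ℝ) • b.elim 0 choiDir) by module]
  exact convex_setOf_isChoi (half a) (half b) (by norm_num) (by norm_num) (by norm_num)

theorem posSemidef_proj {n : Type*} [Fintype n] (v : n → ℂ) : (proj v).PosSemidef :=
  posSemidef_vecMulVec_self_star v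

theorem isChoi_Pfam (r : Fin 5) : IsChoi (Pfam r) := by
  have hs : ((Real.sqrt 2 : ℂ))⁻¹ ^ 2 = 1 / 2 := by
    rw [inv_pow, ← Complex.ofReal_pow, Real.sq_sqrt (by norm_num)]
    norm_num
  fin_cases r
  · exact isChoi_depolChoi
  · refine ⟨(posSemidef_proj _).smul (by norm_num), ?_⟩
    ext i j
    fin_cases i <;> fin_cases j <;> simp [Pfam, ptraceO, proj, ketPhiPlus] <;> ring_nf <;> simp [hs]
  · exact isChoi_one_kronecker (posSemidef_proj _) (by simp [trace_fin_two, proj, ket0])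
  · refine isChoi_one_kronecker (posSemidef_proj _) ?_
    simp [trace_fin_two, proj, ketPlus]
    ring_nf
    norm_num [hs]
  · refine isChoi_one_kronecker (posSemidef_proj _) ?_
    simp [trace_fin_two, proj, ketPlusY]
    ring_nf
    norm_num [hs]

theorem IsChoi.mem_span_choiFrame {J : M4} (hJ : IsChoi J) : J ∈ span ℝ (range choiFrame) := by
  rw [eq_sum_pauliPair J]
  refine sum_mem fun ⟨a, b⟩ _ => ?_
  cases b using Fin.cases with
  | zero =>
    have h : (pauliPair (a, 0) * J).trace = if a = 0 then 2 else 0 := by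
      rw [pauliPair, show sigmaI 0 = 1 from rfl, trace_kronecker_one_mul, hJ.2, mul_one,
        trace_sigmaI]
    rw [h]
    split_ifs with ha
    · subst ha
      have h0 : ((2 : ℂ) / 4) • pauliPair (0, 0) = choiFrame none := by
        rw [choiFrame, Option.elim_none, depolChoi_eq, pauliPair, show sigmaI 0 = 1 from rfl,
          one_kronecker_one, ← Complex.coe_smul]
        norm_num
      exact h0 ▸ subset_span ⟨none, rfl⟩
    · rw [zero_div, zero_smul]
      exact zero_mem _
  | succ o =>
    rw [IsHermitian.trace_mul_eq_ofReal_re (isHermitian_pauliPair _) hJ.1.1,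
      ← RCLike.ofReal_ofNat, ← RCLike.ofReal_div, ← RCLike.real_smul_eq_coe_smul,
      ← choiDir_eq_pauliPair (a, o)]
    exact smul_mem _ _ (subset_span ⟨some (a, o), rfl⟩)

theorem finrank_span_symKron_choiFrame :
    Module.finrank ℝ (span ℝ (range (symKron choiFrame))) = Nat.choose 14 2 := by
  rw [finrank_span_eq_card ((linearIndependent_symKron trace_choiFrame_mul_choiFrame
    (by rintro (_ | _) <;> norm_num)).restrict_scalars' ℝ), Sym2.card]
  rfl

theorem twoCopySpan_eq_span_symKron : twoCopySpan = span ℝ (range (symKron choiFrame)) := by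
  refine le_antisymm ?_ ?_
  · rw [twoCopySpan, span_le]
    rintro _ ⟨J, hJ, rfl⟩
    exact kronecker_self_mem_span_symKron hJ.mem_span_choiFrame
  · exact span_symKron_option_elim_le (c := (1 / 4 : ℝ)) (by norm_num) fun a b =>
      subset_span ⟨_, isChoi_depolChoi_add_quarter_smul a b, rfl⟩

theorem B2_mem_span_symKron (i : Unit ⊕ Fin 5 × Fin 4 × Fin 3 × Bool ⊕
    Fin 5 × (Fin 4 × Fin 3) × (Fin 4 × Fin 3)) : B2 i ∈ span ℝ (range (symKron choiFrame)) := by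
  have hP (r : Fin 5) := (isChoi_Pfam r).mem_span_choiFrame
  have hV (p : Fin 4 × Fin 3) : choiDir p ∈ span ℝ (range choiFrame) := subset_span ⟨some p, rfl⟩
  rcases i with _ | ⟨r, i, o, _ | _⟩ | ⟨r, p, q⟩ <;> refine kronecker_self_mem_span_symKron ?_
  · exact hP 0
  · simpa [sub_eq_add_neg, choiDir] using sub_mem (hP r) (hV (i, o))
  · simpa [choiDir] using add_mem (hP r) (hV (i, o))
  · exact add_mem (add_mem (hP r) (hV p)) (hV q)

-- The squares in `B₂` with `ρ = ½·1` and sign `+`, indexed by unordered pairs of frame indices.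
def b2Witness : Sym2 (Option (Fin 4 × Fin 3)) → M16 :=
  Sym2.lift ⟨fun a b => tsq (depolChoi + a.elim 0 choiDir + b.elim 0 choiDir),
    fun _ _ => by dsimp only; rw [add_right_comm]⟩

theorem range_b2Witness_subset : range b2Witness ⊆ range B2 := by
  rintro _ ⟨q, rfl⟩
  induction q using Sym2.ind with | _ a b =>
  rcases a with _ | p <;> rcases b with _ | q
  · exact ⟨Sum.inl (), by simp [b2Witness, B2, depolChoi]⟩
  · exact ⟨.inr (.inl (0, q.1, q.2, true)), by simp [b2Witness, B2, Pfam, choiDir, depolChoi]⟩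
  · exact ⟨.inr (.inl (0, p.1, p.2, true)), by simp [b2Witness, B2, Pfam, choiDir, depolChoi]⟩
  · exact ⟨.inr (.inr (0, p, q)), by simp [b2Witness, B2, Pfam, choiDir, depolChoi]⟩

theorem span_b2Witness : span ℝ (range b2Witness) = span ℝ (range (symKron choiFrame)) := by
  refine le_antisymm (span_le.2 (range_b2Witness_subset.trans ?_)) ?_
  · exact range_subset_iff.2 B2_mem_span_symKron
  · exact span_symKron_option_elim_le one_ne_zero fun a b =>
      subset_span ⟨s(a, b), by simp [b2Witness, tsq]⟩

theorem span_B2 : span ℝ (range B2) = span ℝ (range (symKron choiFrame)) :=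
  le_antisymm (span_le.2 (range_subset_iff.2 B2_mem_span_symKron))
    (span_b2Witness ▸ span_mono range_b2Witness_subset)

theorem linearIndependent_b2Witness : LinearIndependent ℝ b2Witness := by
  rw [linearIndependent_iff_card_eq_finrank_span, Set.finrank, span_b2Witness,
    finrank_span_symKron_choiFrame, Sym2.card]
  rfl

/-- Eq. (26): the ℝ-span of {J ⊗ J : J a qubit-channel Choi operator} has dimension
91 = C(14,2), equals the ℝ-span of B₂, and B₂ contains a 91-element ℝ-linearly independent
subset spanning it. -/
theorem basis_B2 :
    Module.finrank ℝ twoCopySpan = 91 ∧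
    91 = Nat.choose 14 2 ∧
    Submodule.span ℝ (Set.range B2) = twoCopySpan ∧
    ∃ s : Finset (Matrix ((Fin 2 × Fin 2) × (Fin 2 × Fin 2))
        ((Fin 2 × Fin 2) × (Fin 2 × Fin 2)) ℂ),
      ↑s ⊆ Set.range B2 ∧ s.card = 91 ∧
      LinearIndependent ℝ (fun x : s => (x : Matrix ((Fin 2 × Fin 2) × (Fin 2 × Fin 2))
        ((Fin 2 × Fin 2) × (Fin 2 × Fin 2)) ℂ)) ∧
      Submodule.span ℝ (s : Set _) = twoCopySpan := by
  have hW := twoCopySpan_eq_span_symKron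
  have hli := linearIndependent_b2Witness
  refine ⟨hW ▸ finrank_span_symKron_choiFrame, rfl, span_B2.trans hW.symm,
    (range b2Witness).toFinset, by simpa using range_b2Witness_subset, ?_, ?_, ?_⟩
  · rw [Set.toFinset_card, Set.card_range_of_injective hli.injective, Sym2.card]
    rfl
  · show LinearIndepOn ℝ id ((range b2Witness).toFinset : Set M16)
    rw [Set.coe_toFinset]
    exact (linearIndepOn_id_range_iff hli.injective).2 hli
  · rw [Set.coe_toFinset, span_b2Witness, hW]
end
end
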